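/- Let m = n + k, let L ∈ ℂ^{m×m} be a unitary, proper k-lower Hessenberg matrix, and let Q = diag(I_k, Q̂) where Q̂ ∈ ℂ^{n×n} is a unitary upper Hessenberg matrix. Set C = L Q. Then for every h with 2 ≤ h ≤ n + 1, the submatrix C(h:m, 1:h+k−2) has rank exactly k. -/

import Mathlib

open Matrix

/-- `M` is `k`-upper Hessenberg: `m_{ij} = 0` whenever `i > j + k`. -/
def kUpperHessenberg (k : ℕ) {m : ℕ} (M : Matrix (Fin m) (Fin m) ℂ) : Prop :=
  ∀ i j : Fin m, j.1 + k < i.1 → M i j = 0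

/-- `M` is `k`-lower Hessenberg: `m_{ij} = 0` whenever `j > i + k`. -/
def kLowerHessenberg (k : ℕ) {m : ℕ} (M : Matrix (Fin m) (Fin m) ℂ) : Prop :=
  ∀ i j : Fin m, i.1 + k < j.1 → M i j = 0

/-- A `k`-upper Hessenberg matrix is proper: the outermost entries `h_{j+k,j}` are
all nonzero. -/
def ProperUpper (k : ℕ) {m : ℕ} (M : Matrix (Fin m) (Fin m) ℂ) : Prop :=
  ∀ i j : Fin m, i.1 = j.1 + k → M i j ≠ 0

/-- A `k`-lower Hessenberg matrix is proper: the outermost entries `h_{j,j+k}` are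
all nonzero. -/
def ProperLower (k : ℕ) {m : ℕ} (M : Matrix (Fin m) (Fin m) ℂ) : Prop :=
  ∀ i j : Fin m, j.1 = i.1 + k → M i j ≠ 0

/-- The block diagonal matrix `diag(I_k, Q̂)` for `Q̂ ∈ ℂ^{n×n}`. -/
def diagIQ (n k : ℕ) (Qh : Matrix (Fin n) (Fin n) ℂ) :
    Matrix (Fin (n + k)) (Fin (n + k)) ℂ :=
  Matrix.of fun x y =>
    if h : k ≤ x.1 ∧ k ≤ y.1 then Qh ⟨x.1 - k, by omega⟩ ⟨y.1 - k, by omega⟩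
    else if x.1 = y.1 then 1 else 0

/-!
Put `p = h - 1`. Since `Q` is upper Hessenberg, `C(h:m, 1:h+k-2)` factors through
`L(h:m, 1:p+k)`. The first `p` rows of `L` are orthonormal and, `L` being `k`-lower Hessenberg,
supported on the first `p + k` columns; `L(h:m, 1:p+k)` annihilates their conjugates, so its
rank is at most `k`. Conversely the first `k` columns of `C` are those of `L`. A combination of
them vanishing on rows `h:m` is orthogonal to columns `k+1:k+p` of `L`, whose top `p × p` block
is lower triangular with nonzero diagonal by properness; hence the combination vanishes.
-/

section Support

variable {ι κ m n R : Type*} [Fintype ι] [Fintype κ] [NonUnitalNonAssocSemiring R]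
  {e : κ → ι}

theorem dotProduct_eq_dotProduct_comp_of_support (he : Function.Injective e) (x v : ι → R)
    (hv : ∀ i ∉ Set.range e, v i = 0) : x ⬝ᵥ v = (x ∘ e) ⬝ᵥ (v ∘ e) :=
  (Fintype.sum_of_injective e he _ _ (fun i hi => by simp [hv i hi]) fun _ => rfl).symm

theorem mul_eq_submatrix_mul_submatrix (A : Matrix m ι R) (B : Matrix ι n R)
    (he : Function.Injective e) (hB : ∀ i ∉ Set.range e, ∀ j, B i j = 0) :
    A * B = A.submatrix id e * B.submatrix e id := by
  ext a b
  exact dotProduct_eq_dotProduct_comp_of_support he _ _ fun i hi => hB i hi b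

theorem mulVec_eq_submatrix_mulVec (A : Matrix m ι R) (he : Function.Injective e) {v : ι → R}
    (hv : ∀ i ∉ Set.range e, v i = 0) : A *ᵥ v = A.submatrix id e *ᵥ (v ∘ e) :=
  funext fun _ => dotProduct_eq_dotProduct_comp_of_support he _ _ hv

end Support

section Unitary

variable {ι α β γ 𝕜 : Type*} [Fintype ι] [DecidableEq ι] [Field 𝕜] [StarRing 𝕜]
  {L : Matrix ι ι 𝕜}

theorem submatrix_mul_conjTranspose_submatrix_of_mem_unitaryGroup [Fintype γ]
    (hL : L ∈ unitaryGroup ι 𝕜) (r₁ : β → ι) (r₂ : α → ι) {e : γ → ι}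
    (he : Function.Injective e) (hr₂ : ∀ a, ∀ j ∉ Set.range e, L (r₂ a) j = 0) :
    L.submatrix r₁ e * (L.submatrix r₂ e)ᴴ = (1 : Matrix ι ι 𝕜).submatrix r₁ r₂ := by
  have hsupp : ∀ j ∉ Set.range e, ∀ a, (L.submatrix r₂ id)ᴴ j a = 0 := fun j hj a => by
    simp [hr₂ a j hj]
  rw [← mem_unitaryGroup_iff.mp hL, star_eq_conjTranspose, submatrix_mul _ _ _ id _
    Function.bijective_id, ← conjTranspose_submatrix,
    mul_eq_submatrix_mul_submatrix _ _ he hsupp]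
  rfl

theorem conjTranspose_submatrix_mul_submatrix_of_mem_unitaryGroup
    (hL : L ∈ unitaryGroup ι 𝕜) (c₁ : β → ι) (c₂ : γ → ι) :
    (L.submatrix id c₁)ᴴ * L.submatrix id c₂ =
      (1 : Matrix ι ι 𝕜).submatrix c₁ c₂ := by
  rw [← mem_unitaryGroup_iff'.mp hL, star_eq_conjTranspose, conjTranspose_submatrix,
    submatrix_mul _ _ _ id _ Function.bijective_id]

/-- Restricted to `e`, the rows `r₁` stay orthonormal and orthogonal to the rows `r₂`. -/
theorem rank_submatrix_add_card_le_of_mem_unitaryGroup [Fintype α] [DecidableEq α] [Fintype β]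
    [Fintype γ] (hL : L ∈ unitaryGroup ι 𝕜)
    {r₁ : α → ι} {r₂ : β → ι} {e : γ → ι} (hr₁ : Function.Injective r₁)
    (hr : ∀ a b, r₁ a ≠ r₂ b) (he : Function.Injective e)
    (hsupp : ∀ a, ∀ j ∉ Set.range e, L (r₁ a) j = 0) :
    (L.submatrix r₂ e).rank + Fintype.card α ≤ Fintype.card γ := by
  set T := L.submatrix r₁ e
  have hTT : T * Tᴴ = 1 := by
    rw [submatrix_mul_conjTranspose_submatrix_of_mem_unitaryGroup hL r₁ r₁ he hsupp,
      submatrix_one _ hr₁]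
  have hAT : L.submatrix r₂ e * Tᴴ = 0 := by
    rw [submatrix_mul_conjTranspose_submatrix_of_mem_unitaryGroup hL r₂ r₁ he hsupp]
    ext b a
    simp [one_apply, (hr a b).symm]
  have hrankT : Fintype.card α ≤ Tᴴ.rank := by
    simpa [hTT, rank_one] using rank_mul_le_right T Tᴴ
  have := rank_add_rank_le_card_of_mul_eq_zero hAT
  omega

/-- A combination of the columns `t` that vanishes on the rows `r₂` is supported on the rows
`r₁` and orthogonal to the columns `s`, so the invertible block `L(r₁, s)ᴴ` kills it. -/
theorem rank_submatrix_eq_card_of_mem_unitaryGroup [Fintype α] [DecidableEq α] [Fintype γ]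
    [DecidableEq γ] (hL : L ∈ unitaryGroup ι 𝕜)
    {r₁ s : α → ι} {r₂ : β → ι} {t : γ → ι} (hr₁ : Function.Injective r₁)
    (hr : ∀ i ∉ Set.range r₁, i ∈ Set.range r₂) (ht : Function.Injective t)
    (hst : ∀ a c, s a ≠ t c) (hdet : (L.submatrix r₁ s).det ≠ 0) :
    (L.submatrix r₂ t).rank = Fintype.card γ := by
  suffices hinj : Function.Injective (L.submatrix r₂ t).mulVecLin by
    rw [rank, LinearMap.finrank_range_of_inj hinj, Module.finrank_fintype_fun_eq_card]
  refine (injective_iff_map_eq_zero _).mpr fun c hc => ?_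
  set P := L.submatrix id t
  set u := P *ᵥ c
  have hu : ∀ i ∉ Set.range r₁, u i = 0 := fun i hi => by
    obtain ⟨b, rfl⟩ := hr i hi
    exact congrFun hc b
  have horth : (L.submatrix id s)ᴴ *ᵥ u = 0 := by
    have hzero : (1 : Matrix ι ι 𝕜).submatrix s t = 0 := by
      ext a c
      simp [one_apply, hst a c]
    rw [mulVec_mulVec, conjTranspose_submatrix_mul_submatrix_of_mem_unitaryGroup hL, hzero,
      zero_mulVec]
  have hu₁ : u ∘ r₁ = 0 := by
    rw [mulVec_eq_submatrix_mulVec _ hr₁ hu] at horth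
    exact eq_zero_of_mulVec_eq_zero (M := (L.submatrix r₁ s)ᴴ)
      (by rwa [det_conjTranspose, star_ne_zero]) horth
  have hu₀ : u = 0 := funext fun i => by
    by_cases hi : i ∈ Set.range r₁
    · obtain ⟨a, rfl⟩ := hi
      exact congrFun hu₁ a
    · exact hu i hi
  calc c = (Pᴴ * P) *ᵥ c := by
        rw [conjTranspose_submatrix_mul_submatrix_of_mem_unitaryGroup hL, submatrix_one _ ht,
          one_mulVec]
    _ = Pᴴ *ᵥ u := (mulVec_mulVec _ _ _).symm
    _ = 0 := by rw [hu₀, mulVec_zero]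

end Unitary

section Hessenberg

variable {N k : ℕ} {L : Matrix (Fin N) (Fin N) ℂ}

theorem det_submatrix_ne_zero_of_properLower (hLH : kLowerHessenberg k L)
    (hLp : ProperLower k L) {p : ℕ} (hp : p + k ≤ N) :
    (L.submatrix (Fin.castLE (by omega)) fun j : Fin p => ⟨j + k, by omega⟩).det ≠ 0 := by
  rw [det_of_isLowerTriangular]
  · exact Finset.prod_ne_zero_iff.mpr fun i _ => hLp _ _ rfl
  · intro i j hij
    rw [OrderDual.toDual_lt_toDual, Fin.lt_def] at hij
    exact hLH _ _ (by simp only [Fin.val_castLE]; omega)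

theorem rank_submatrix_le_of_kLowerHessenberg (hLu : L ∈ unitaryGroup (Fin N) ℂ)
    (hLH : kLowerHessenberg k L) {β : Type*} [Fintype β] {r : β → Fin N} {p : ℕ}
    (hr : ∀ b, p ≤ r b) (hp : p + k ≤ N) :
    (L.submatrix r (Fin.castLE hp)).rank ≤ k := by
  have := rank_submatrix_add_card_le_of_mem_unitaryGroup hLu
    (r₁ := Fin.castLE (show p ≤ N by omega)) (r₂ := r) (Fin.castLE_injective _)
    (fun a b hab => by have := hr b; rw [← hab, Fin.val_castLE] at this; omega)
    (Fin.castLE_injective hp) fun a j hj => hLH _ _ ?_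
  · simp only [Fintype.card_fin] at this
    omega
  have : p + k ≤ (j : ℕ) := by
    by_contra! h
    exact hj ⟨⟨j, h⟩, rfl⟩
  simp only [Fin.val_castLE]
  omega

theorem rank_submatrix_eq_of_properLower (hLu : L ∈ unitaryGroup (Fin N) ℂ)
    (hLH : kLowerHessenberg k L) (hLp : ProperLower k L) {β : Type*} {r : β → Fin N} {p : ℕ}
    (hr : ∀ i : Fin N, p ≤ i → i ∈ Set.range r) (hp : p + k ≤ N) :
    (L.submatrix r (Fin.castLE (show k ≤ N by omega))).rank = k := by
  refine (rank_submatrix_eq_card_of_mem_unitaryGroup hLu (Fin.castLE_injective _)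
    (fun i hi => hr i ?_) (Fin.castLE_injective _) (fun a c h => ?_)
    (det_submatrix_ne_zero_of_properLower hLH hLp hp)).trans (Fintype.card_fin k)
  · by_contra! h
    exact hi ⟨⟨i, h⟩, rfl⟩
  · have := congrArg Fin.val h
    simp only [Fin.val_castLE] at this
    omega

theorem submatrix_mul_eq_of_kUpperHessenberg {m : Type*} (A : Matrix m (Fin N) ℂ)
    {Q : Matrix (Fin N) (Fin N) ℂ} (hQ : kUpperHessenberg k Q) {q q' : ℕ} (hq : q ≤ N)
    (hq' : q' ≤ N) (hqq' : q + k ≤ q') :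
    (A * Q).submatrix id (Fin.castLE hq) =
      A.submatrix id (Fin.castLE hq') * Q.submatrix (Fin.castLE hq') (Fin.castLE hq) := by
  rw [submatrix_mul _ _ _ id _ Function.bijective_id]
  refine mul_eq_submatrix_mul_submatrix _ _ (Fin.castLE_injective hq') fun i hi j => hQ _ _ ?_
  have : q' ≤ (i : ℕ) := by
    by_contra! h
    exact hi ⟨⟨i, h⟩, rfl⟩
  simp only [Fin.val_castLE, id_eq]
  omega

end Hessenberg

theorem kUpperHessenberg_diagIQ {n k l : ℕ} {Qh : Matrix (Fin n) (Fin n) ℂ}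
    (hQ : kUpperHessenberg l Qh) : kUpperHessenberg l (diagIQ n k Qh) := by
  intro x y hxy
  simp only [diagIQ, of_apply]
  split_ifs with hk
  · exact hQ _ _ (by simp only; omega)
  · omega
  · rfl

theorem mul_diagIQ_submatrix_castLE {m : Type*} {n k : ℕ} (A : Matrix m (Fin (n + k)) ℂ)
    (Qh : Matrix (Fin n) (Fin n) ℂ) :
    (A * diagIQ n k Qh).submatrix id (Fin.castLE (Nat.le_add_left k n)) =
      A.submatrix id (Fin.castLE (Nat.le_add_left k n)) := by
  ext a j
  have hj : ¬k ≤ (j : ℕ) := by omega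
  rw [submatrix_apply, mul_apply, Finset.sum_eq_single (Fin.castLE (Nat.le_add_left k n) j)]
  · simp [diagIQ, hj]
  · intro x _ hx
    simp only [ne_eq, Fin.ext_iff, Fin.val_castLE, id_eq, diagIQ, of_apply, hj, and_false,
      ↓reduceDIte, mul_ite, mul_one, mul_zero, ite_eq_right_iff] at hx ⊢
    exact fun h => absurd h hx
  · simp

/-- **Quasiseparable structure of `C = L Q`.**
Let `m = n + k`, let `L ∈ ℂ^{m×m}` be a unitary, proper `k`-lower Hessenberg matrix
and let `Q = diag(I_k, Q̂)` with `Q̂ ∈ ℂ^{n×n}` unitary upper Hessenberg. Then for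
every `2 ≤ h ≤ n + 1` the submatrix `C(h:m, 1:h+k−2)` of `C = L Q` has rank
exactly `k`. -/
theorem LQ_lower_rank (n k : ℕ)
    (L : Matrix (Fin (n + k)) (Fin (n + k)) ℂ)
    (hLu : L ∈ Matrix.unitaryGroup (Fin (n + k)) ℂ)
    (hLH : kLowerHessenberg k L) (hLp : ProperLower k L)
    (Qh : Matrix (Fin n) (Fin n) ℂ)
    (hQH : kUpperHessenberg 1 Qh)
    (h : ℕ) (hh1 : 2 ≤ h) (hh2 : h ≤ n + 1) :
    (Matrix.of fun (a : Fin (n + k + 1 - h)) (b : Fin (h + k - 2)) =>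
        (L * diagIQ n k Qh) ⟨h - 1 + a.1, by omega⟩ ⟨b.1, by omega⟩).rank = k := by
  set Q := diagIQ n k Qh
  set r : Fin (n + k + 1 - h) → Fin (n + k) := fun a => ⟨h - 1 + a, by omega⟩
  have hr : ∀ i : Fin (n + k), h - 1 ≤ i → i ∈ Set.range r := fun i hi =>
    ⟨⟨i - (h - 1), by omega⟩, Fin.ext (by simp only [r]; omega)⟩
  have hp : h - 1 + k ≤ n + k := by omega
  set M := (L * Q).submatrix r (Fin.castLE (show h + k - 2 ≤ n + k by omega))
  change M.rank = k
  apply le_antisymm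
  · have hM : M = L.submatrix r (Fin.castLE hp) * Q.submatrix (Fin.castLE hp) (Fin.castLE _) :=
      congrArg (submatrix · r id)
        (submatrix_mul_eq_of_kUpperHessenberg L (kUpperHessenberg_diagIQ hQH) _ hp (by omega))
    rw [hM]
    exact (rank_mul_le_left _ _).trans
      (rank_submatrix_le_of_kLowerHessenberg hLu hLH (fun a => by simp [r]) hp)
  · calc k = (L.submatrix r (Fin.castLE (Nat.le_add_left k n))).rank :=
          (rank_submatrix_eq_of_properLower hLu hLH hLp hr hp).symm
      _ = (((L * Q).submatrix id (Fin.castLE (Nat.le_add_left k n))).submatrix r id).rank := by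
          rw [mul_diagIQ_submatrix_castLE]
          rfl
      _ ≤ M.rank := rank_submatrix_le M id (Fin.castLE (show k ≤ h + k - 2 by omega))
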